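/- Let (X, μ) be a measure space, let ρ(p) = ρ_ref · exp(c·(p − p_ref)) with constants ρ_ref > 0, c > 0, p_ref ∈ ℝ, let φ > 0 be a constant, and let m ≤ M be real numbers. Set δ = c·ρ_ref·exp(c·(m − p_ref)) and L = c·ρ_ref·exp(c·(M − p_ref)). Then for all measurable functions f, g, f′, g′ : X → ℝ taking values in [m, M] μ-almost everywhere, with f − g ∈ L²(μ) and f′ − g′ ∈ L²(μ), one has ∫_X φ·(ρ(f) − ρ(g))·(f − g) dμ − ∫_X φ·(ρ(f′) − ρ(g′))·(f − g) dμ ≥ (φ·δ/2)·‖f − g‖²_{L²(μ)} − (φ·L²/(2δ))·‖f′ − g′‖²_{L²(μ)}. -/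

import Mathlib

/-!
Since `ρ' = c ρ` is increasing, on `[m, M]` the derivative of `ρ` lies between `δ = ρ'(m)` and
`L = ρ'(M)`, so by the mean value theorem `ρ` is strongly monotone with constant `δ` and
Lipschitz with constant `L` there. Pointwise, the first integrand is then at least
`φ δ (f - g)²`, and the second at most
`φ L |f' - g'| |f - g| ≤ φ δ/2 (f - g)² + φ L²/(2δ) (f' - g')²` by Young's inequality.
Both integrands are integrable by Cauchy–Schwarz, as `ρ ∘ f - ρ ∘ g` is dominated by `L |f - g|`.
-/

open MeasureTheory Set

lemma mul_sq_le_sub_mul_sub_of_le_deriv {f : ℝ → ℝ} (hf : Differentiable ℝ f) {D : Set ℝ}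
    (hD : Convex ℝ D) {δ : ℝ} (hδ : ∀ x ∈ D, δ ≤ deriv f x) {p q : ℝ} (hp : p ∈ D)
    (hq : q ∈ D) : δ * (p - q) ^ 2 ≤ (f p - f q) * (p - q) := by
  wlog hqp : q ≤ p generalizing p q
  · have := this hq hp (le_of_not_ge hqp)
    linarith [show (f q - f p) * (q - p) = (f p - f q) * (p - q) by ring,
      show (q - p) ^ 2 = (p - q) ^ 2 by ring]
  have hslope : δ * (p - q) ≤ f p - f q :=
    hD.mul_sub_le_image_sub_of_le_deriv hf.continuous.continuousOn hf.differentiableOn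
      (fun x hx => hδ x (interior_subset hx)) q hq p hp hqp
  calc δ * (p - q) ^ 2 = δ * (p - q) * (p - q) := by ring
    _ ≤ (f p - f q) * (p - q) := mul_le_mul_of_nonneg_right hslope (sub_nonneg.2 hqp)

lemma young_mul_abs_le {δ : ℝ} (hδ : 0 < δ) (L u v : ℝ) :
    L * |v| * |u| ≤ δ / 2 * u ^ 2 + L ^ 2 / (2 * δ) * v ^ 2 := by
  have hsq : 0 ≤ (δ * |u| - L * |v|) ^ 2 / (2 * δ) := by positivity
  have hexpand : (δ * |u| - L * |v|) ^ 2 / (2 * δ) =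
      δ / 2 * u ^ 2 + L ^ 2 / (2 * δ) * v ^ 2 - L * |v| * |u| := by
    rw [← sq_abs u, ← sq_abs v]
    field_simp
    ring
  linarith

lemma le_mul_sub_mul_of_sq_le_of_abs_le {δ L a b u v : ℝ} (hδ : 0 < δ) (ha : δ * u ^ 2 ≤ a * u)
    (hb : |b| ≤ L * |v|) : δ / 2 * u ^ 2 - L ^ 2 / (2 * δ) * v ^ 2 ≤ a * u - b * u := by
  have hbu : b * u ≤ L * |v| * |u| :=
    calc b * u ≤ |b| * |u| := (le_abs_self _).trans (abs_mul b u).le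
      _ ≤ L * |v| * |u| := mul_le_mul_of_nonneg_right hb (abs_nonneg u)
  have hu : 0 ≤ δ / 2 * u ^ 2 := by positivity
  linarith [young_mul_abs_le hδ L u v]

section Integral

variable {X : Type*} [MeasurableSpace X] {μ : Measure X} {ρ : ℝ → ℝ} {s : Set ℝ} {δ L : ℝ}
  {f g f' g' : X → ℝ}

lemma memLp_comp_sub_comp (hρ : Continuous ρ)
    (hlip : ∀ p ∈ s, ∀ q ∈ s, |ρ p - ρ q| ≤ L * |p - q|) (hf : Measurable f) (hg : Measurable g)
    (hfs : ∀ᵐ x ∂μ, f x ∈ s) (hgs : ∀ᵐ x ∂μ, g x ∈ s) (hfg : MemLp (f - g) 2 μ) :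
    MemLp (fun x => ρ (f x) - ρ (g x)) 2 μ := by
  refine (hfg.const_mul L).of_le
    ((hρ.measurable.comp hf).sub (hρ.measurable.comp hg)).aestronglyMeasurable ?_
  filter_upwards [hfs, hgs] with x hfx hgx
  simp only [Pi.sub_apply, Real.norm_eq_abs, abs_mul]
  exact (hlip _ hfx _ hgx).trans (mul_le_mul_of_nonneg_right (le_abs_self L) (abs_nonneg _))

theorem le_integral_sub_integral_of_strongMono_of_lipschitz (hρ : Continuous ρ) (hδ : 0 < δ)
    (hmono : ∀ p ∈ s, ∀ q ∈ s, δ * (p - q) ^ 2 ≤ (ρ p - ρ q) * (p - q))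
    (hlip : ∀ p ∈ s, ∀ q ∈ s, |ρ p - ρ q| ≤ L * |p - q|)
    (hf : Measurable f) (hg : Measurable g) (hf' : Measurable f') (hg' : Measurable g')
    (hfs : ∀ᵐ x ∂μ, f x ∈ s) (hgs : ∀ᵐ x ∂μ, g x ∈ s)
    (hf's : ∀ᵐ x ∂μ, f' x ∈ s) (hg's : ∀ᵐ x ∂μ, g' x ∈ s)
    (hfg : MemLp (f - g) 2 μ) (hf'g' : MemLp (f' - g') 2 μ) :
    δ / 2 * (∫ x, (f x - g x) ^ 2 ∂μ) - L ^ 2 / (2 * δ) * (∫ x, (f' x - g' x) ^ 2 ∂μ) ≤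
      (∫ x, (ρ (f x) - ρ (g x)) * (f x - g x) ∂μ) -
        ∫ x, (ρ (f' x) - ρ (g' x)) * (f x - g x) ∂μ := by
  have hsq : Integrable (fun x => (f x - g x) ^ 2) μ := hfg.integrable_sq
  have hsq' : Integrable (fun x => (f' x - g' x) ^ 2) μ := hf'g'.integrable_sq
  have hA : Integrable (fun x => (ρ (f x) - ρ (g x)) * (f x - g x)) μ :=
    (memLp_comp_sub_comp hρ hlip hf hg hfs hgs hfg).integrable_mul hfg
  have hB : Integrable (fun x => (ρ (f' x) - ρ (g' x)) * (f x - g x)) μ :=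
    (memLp_comp_sub_comp hρ hlip hf' hg' hf's hg's hf'g').integrable_mul hfg
  rw [← integral_const_mul, ← integral_const_mul, ← integral_sub (hsq.const_mul _)
    (hsq'.const_mul _), ← integral_sub hA hB]
  refine integral_mono_ae ((hsq.const_mul _).sub (hsq'.const_mul _)) (hA.sub hB) ?_
  filter_upwards [hfs, hgs, hf's, hg's] with x hfx hgx hf'x hg'x
  exact le_mul_sub_mul_of_sq_le_of_abs_le hδ (hmono _ hfx _ hgx) (hlip _ hf'x _ hg'x)

end Integral

lemma deriv_const_mul_exp_mul_sub (a c p₀ x : ℝ) :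
    deriv (fun p => a * Real.exp (c * (p - p₀))) x = c * a * Real.exp (c * (x - p₀)) := by
  have h := (((hasDerivAt_id x).sub_const p₀).const_mul c).exp.const_mul a
  exact h.deriv.trans (by simp only [id, mul_one]; ring)

theorem rho_telescoping_lower_bound_general
    {X : Type*} [MeasurableSpace X] (μ : Measure X)
    (ρref c pref : ℝ) (hρref : 0 < ρref) (hc : 0 < c)
    (ρ : ℝ → ℝ) (hρ : ∀ p, ρ p = ρref * Real.exp (c * (p - pref)))
    (φ : ℝ) (hφ : 0 < φ)
    (m M : ℝ)
    (δ L : ℝ)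
    (hδ : δ = c * ρref * Real.exp (c * (m - pref)))
    (hL : L = c * ρref * Real.exp (c * (M - pref)))
    (f g f' g' : X → ℝ)
    (hf : Measurable f) (hg : Measurable g) (hf' : Measurable f') (hg' : Measurable g')
    (hfbd : ∀ᵐ x ∂μ, f x ∈ Set.Icc m M) (hgbd : ∀ᵐ x ∂μ, g x ∈ Set.Icc m M)
    (hf'bd : ∀ᵐ x ∂μ, f' x ∈ Set.Icc m M) (hg'bd : ∀ᵐ x ∂μ, g' x ∈ Set.Icc m M)
    (hfg : MemLp (f - g) 2 μ) (hf'g' : MemLp (f' - g') 2 μ) :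
    (∫ x, φ * (ρ (f x) - ρ (g x)) * (f x - g x) ∂μ) -
        (∫ x, φ * (ρ (f' x) - ρ (g' x)) * (f x - g x) ∂μ) ≥
      φ * δ / 2 * (∫ x, (f x - g x) ^ 2 ∂μ) -
        φ * L ^ 2 / (2 * δ) * ∫ x, (f' x - g' x) ^ 2 ∂μ := by
  have hρ_eq : ρ = fun p => ρref * Real.exp (c * (p - pref)) := funext hρ
  have hδpos : 0 < δ := by rw [hδ]; positivity
  have hdiff : Differentiable ℝ ρ := by rw [hρ_eq]; fun_prop
  have hderiv : ∀ x ∈ Icc m M, deriv ρ x ∈ Icc δ L := fun x hx => by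
    rw [hρ_eq, deriv_const_mul_exp_mul_sub, hδ, hL]
    exact ⟨by gcongr; exact hx.1, by gcongr; exact hx.2⟩
  have hmono : ∀ p ∈ Icc m M, ∀ q ∈ Icc m M, δ * (p - q) ^ 2 ≤ (ρ p - ρ q) * (p - q) :=
    fun p hp q hq => mul_sq_le_sub_mul_sub_of_le_deriv hdiff (convex_Icc m M)
      (fun x hx => (hderiv x hx).1) hp hq
  have hlip : ∀ p ∈ Icc m M, ∀ q ∈ Icc m M, |ρ p - ρ q| ≤ L * |p - q| :=
    fun p hp q hq => (convex_Icc m M).norm_image_sub_le_of_norm_deriv_le (fun x _ => hdiff x)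
      (fun x hx => (Real.norm_of_nonneg (hδpos.le.trans (hderiv x hx).1)).trans_le
        (hderiv x hx).2) hq hp
  have key := le_integral_sub_integral_of_strongMono_of_lipschitz hdiff.continuous hδpos
    hmono hlip hf hg hf' hg' hfbd hgbd hf'bd hg'bd hfg hf'g'
  simp_rw [mul_assoc φ, integral_const_mul]
  exact le_of_eq_of_le (by ring)
    ((mul_le_mul_of_nonneg_left key hφ.le).trans_eq (mul_sub φ _ _))

/-- Two-term lower bound combining strong monotonicity, the Lipschitz bound
and Young's inequality, used to telescope in time in the a posteriori error
estimate. Here `δ = c·ρ_ref·exp(c·(m − p_ref))` and `L = c·ρ_ref·exp(c·(M − p_ref))`. -/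
theorem rho_telescoping_lower_bound
    {X : Type*} [MeasurableSpace X] (μ : Measure X)
    (ρref c pref : ℝ) (hρref : 0 < ρref) (hc : 0 < c)
    (ρ : ℝ → ℝ) (hρ : ∀ p, ρ p = ρref * Real.exp (c * (p - pref)))
    (φ : ℝ) (hφ : 0 < φ)
    (m M : ℝ) (hmM : m ≤ M)
    (δ L : ℝ)
    (hδ : δ = c * ρref * Real.exp (c * (m - pref)))
    (hL : L = c * ρref * Real.exp (c * (M - pref)))
    (f g f' g' : X → ℝ)
    (hf : Measurable f) (hg : Measurable g) (hf' : Measurable f') (hg' : Measurable g')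
    (hfbd : ∀ᵐ x ∂μ, f x ∈ Set.Icc m M) (hgbd : ∀ᵐ x ∂μ, g x ∈ Set.Icc m M)
    (hf'bd : ∀ᵐ x ∂μ, f' x ∈ Set.Icc m M) (hg'bd : ∀ᵐ x ∂μ, g' x ∈ Set.Icc m M)
    (hfg : MemLp (f - g) 2 μ) (hf'g' : MemLp (f' - g') 2 μ) :
    (∫ x, φ * (ρ (f x) - ρ (g x)) * (f x - g x) ∂μ) -
        (∫ x, φ * (ρ (f' x) - ρ (g' x)) * (f x - g x) ∂μ) ≥
      φ * δ / 2 * (∫ x, (f x - g x) ^ 2 ∂μ) -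
        φ * L ^ 2 / (2 * δ) * ∫ x, (f' x - g' x) ^ 2 ∂μ :=
  rho_telescoping_lower_bound_general μ ρref c pref hρref hc ρ hρ φ hφ m M δ L hδ hL f g f' g' hf hg
    hf' hg' hfbd hgbd hf'bd hg'bd hfg hf'g'
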